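/- arXiv:1704.01287 — 4 statements merged into one kernel-verified Lean document; each statement's English description precedes it below -/
import Mathlib

section
/- Let u∞ ∈ (0,∞)^N be a complex balanced equilibrium of a reaction network. Then for all i, j ∈ {1,…,N}, ∑_{r=1}^R k_r u∞^{y_r} y_{r,i} y_{r,j} = ∑_{r=1}^R k_r u∞^{y_r} y_{r,i}' y_{r,j}'. -/
/-!
Complex balance says that the weights `k r * u ^ y r` pushed forward along the reactant map
`r ↦ y r` and along the product map `r ↦ y' r` give the same function on complexes. Both
mixed moments are sums of the test function `c ↦ c i * c j` against these pushforwards.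
-/

open Finset

section Fiberwise

variable {ι α M : Type*} [Fintype ι] [DecidableEq α] [CommSemiring M]

theorem Finset.sum_mul_comp_eq_sum_fiberwise {w : ι → M} {f : ι → α} {s : Finset α}
    (hf : ∀ r, f r ∈ s) (φ : α → M) :
    ∑ r, w r * φ (f r) = ∑ c ∈ s, (∑ r with f r = c, w r) * φ c := by
  rw [← sum_fiberwise_of_maps_to (fun r _ => hf r)]
  refine sum_congr rfl fun c _ => ?_
  rw [sum_mul]
  exact sum_congr rfl fun r hr => by rw [(mem_filter.mp hr).2]

theorem Finset.sum_mul_comp_eq_of_sum_fiberwise_eq {w : ι → M} {f g : ι → α}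
    (hfg : ∀ c, ∑ r with f r = c, w r = ∑ r with g r = c, w r) (φ : α → M) :
    ∑ r, w r * φ (f r) = ∑ r, w r * φ (g r) := by
  let s := univ.image f ∪ univ.image g
  have hf : ∀ r, f r ∈ s := fun r => mem_union_left _ (mem_image_of_mem f (mem_univ r))
  have hg : ∀ r, g r ∈ s := fun r => mem_union_right _ (mem_image_of_mem g (mem_univ r))
  rw [sum_mul_comp_eq_sum_fiberwise hf, sum_mul_comp_eq_sum_fiberwise hg]
  exact sum_congr rfl fun c _ => by rw [hfg c]

end Fiberwise

theorem complex_balance_mixed_moment_general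
    {N R : ℕ} (y y' : Fin R → Fin N → ℝ) (k : Fin R → ℝ)
    (u : Fin N → ℝ)
    (hcb : ∀ c : Fin N → ℝ,
      ∑ r ∈ Finset.univ.filter (fun r => y r = c), k r * ∏ j, u j ^ y r j
        = ∑ r ∈ Finset.univ.filter (fun r => y' r = c), k r * ∏ j, u j ^ y r j) :
    ∀ i j : Fin N,
      ∑ r, k r * (∏ l, u l ^ y r l) * (y r i * y r j)
        = ∑ r, k r * (∏ l, u l ^ y r l) * (y' r i * y' r j) :=
  fun i j => sum_mul_comp_eq_of_sum_fiberwise_eq hcb fun c => c i * c j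

/-- For a complex balanced equilibrium `u∞`, the mixed second moments of reactant and
product stoichiometric coefficients weighted by `k_r u∞^{y_r}` coincide. -/
theorem complex_balance_mixed_moment
    {N R : ℕ} (y y' : Fin R → Fin N → ℝ) (k : Fin R → ℝ)
    (hy : ∀ r i, 0 ≤ y r i) (hy' : ∀ r i, 0 ≤ y' r i) (hk : ∀ r, 0 < k r)
    (u : Fin N → ℝ) (hu : ∀ i, 0 < u i)
    (hcb : ∀ c : Fin N → ℝ,
      ∑ r ∈ Finset.univ.filter (fun r => y r = c), k r * ∏ j, u j ^ y r j
        = ∑ r ∈ Finset.univ.filter (fun r => y' r = c), k r * ∏ j, u j ^ y r j) :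
    ∀ i j : Fin N,
      ∑ r, k r * (∏ l, u l ^ y r l) * (y r i * y r j)
        = ∑ r, k r * (∏ l, u l ^ y r l) * (y' r i * y' r j) :=
  complex_balance_mixed_moment_general y y' k u hcb
end

section
/- Let u∞ ∈ (0,∞)^N be a complex balanced equilibrium and define the linearized operator L_i v = ∑_{r=1}^R k_r u∞^{y_r} ∑_{j=1}^N (y_{r,i}' − y_{r,i}) y_{r,j} v_j / u_{j,∞} for v ∈ ℝ^N. Then for all v ∈ ℝ^N, ∑_{i=1}^N (L_i v) · (v_i / u_{i,∞}) = −(1/2) ∑_{r=1}^R k_r u∞^{y_r} ( ∑_{i=1}^N (y_{r,i}' − y_{r,i}) v_i / u_{i,∞} )^2. -/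
open scoped Classical BigOperators

/-!
With `w = v / u∞`, `q r = k r u∞^{y_r}`, `a r = ⟨y_r, w⟩` and `b r = ⟨y_r', w⟩`, the left-hand side
is `∑ r, q r (b r - a r) a r`. Polarization gives
`(b - a) a = -(b - a)² / 2 + (b² - a²) / 2`, and complex balance says that the weights `q` pushed
forward along `r ↦ y_r` and along `r ↦ y_r'` coincide on every complex, so
`∑ r, q r (b r)² = ∑ r, q r (a r)²`.
-/

open Finset Matrix

theorem Finset.sum_mul_comp_eq_sum_mul_fiber {R β K : Type*} [Fintype R] [DecidableEq β]
    [CommSemiring K] (q : R → K) (f : R → β) (F : β → K) {S : Finset β}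
    (hS : ∀ r, f r ∈ S) :
    ∑ r, q r * F (f r) = ∑ c ∈ S, F c * ∑ r with f r = c, q r := by
  rw [← sum_fiberwise_of_maps_to (fun r _ => hS r)]
  refine sum_congr rfl fun c _ => ?_
  rw [mul_sum]
  refine sum_congr rfl fun r hr => ?_
  rw [(mem_filter.mp hr).2, mul_comm]

theorem Finset.sum_mul_comp_eq_of_sum_fiber_eq {R β K : Type*} [Fintype R] [DecidableEq β]
    [CommSemiring K] (q : R → K) (f g : R → β)
    (h : ∀ c, ∑ r with f r = c, q r = ∑ r with g r = c, q r) (F : β → K) :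
    ∑ r, q r * F (g r) = ∑ r, q r * F (f r) := by
  have hf : ∀ r, f r ∈ univ.image f ∪ univ.image g := fun r => by simp
  have hg : ∀ r, g r ∈ univ.image f ∪ univ.image g := fun r => by simp
  rw [sum_mul_comp_eq_sum_mul_fiber q f F hf, sum_mul_comp_eq_sum_mul_fiber q g F hg]
  simp only [h]

theorem sum_mul_sub_mul_eq_neg_half_sum_mul_sq {R K : Type*} [Fintype R] [Field K] [CharZero K]
    (q a b : R → K) (h : ∑ r, q r * b r ^ 2 = ∑ r, q r * a r ^ 2) :
    ∑ r, q r * ((b r - a r) * a r) = -(1/2) * ∑ r, q r * (b r - a r) ^ 2 := by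
  have polarize : ∀ r, q r * ((b r - a r) * a r)
      = -(1/2) * (q r * (b r - a r) ^ 2) + (1/2) * (q r * b r ^ 2 - q r * a r ^ 2) :=
    fun r => by ring
  simp only [polarize, sum_add_distrib, ← mul_sum, sum_sub_distrib, h, sub_self, mul_zero,
    add_zero]

theorem sum_sum_rankOne_mul_eq_sum_mul_dotProduct {R ι K : Type*} [Fintype R] [Fintype ι]
    [CommSemiring K] (q : R → K) (d a : R → ι → K) (w : ι → K) :
    ∑ i, (∑ r, q r * ∑ j, d r i * a r j * w j) * w i
      = ∑ r, q r * ((d r ⬝ᵥ w) * (a r ⬝ᵥ w)) := by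
  simp only [dotProduct, sum_mul, mul_sum]
  rw [sum_comm]
  refine sum_congr rfl fun r _ => ?_
  rw [sum_comm]
  refine sum_congr rfl fun i _ => sum_congr rfl fun j _ => ?_
  ring

theorem linearised_operator_identity_general
    {N R : ℕ} (y y' : Fin R → Fin N → ℝ) (k : Fin R → ℝ)
    (u : Fin N → ℝ)
    (hcb : ∀ c : Fin N → ℝ,
      ∑ r ∈ Finset.univ.filter (fun r => y r = c), k r * ∏ j, u j ^ y r j
        = ∑ r ∈ Finset.univ.filter (fun r => y' r = c), k r * ∏ j, u j ^ y r j)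
    (L : (Fin N → ℝ) → Fin N → ℝ)
    (hL : ∀ v i, L v i =
      ∑ r, k r * (∏ j, u j ^ y r j) * ∑ j, (y' r i - y r i) * y r j * (v j / u j)) :
    ∀ v : Fin N → ℝ,
      ∑ i, L v i * (v i / u i)
        = -(1/2) * ∑ r, k r * (∏ j, u j ^ y r j)
            * (∑ i, (y' r i - y r i) * (v i / u i)) ^ 2 := by
  intro v
  set q : Fin R → ℝ := fun r => k r * ∏ j, u j ^ y r j
  set w : Fin N → ℝ := fun i => v i / u i
  have hquad : ∑ r, q r * (y' r ⬝ᵥ w) ^ 2 = ∑ r, q r * (y r ⬝ᵥ w) ^ 2 :=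
    sum_mul_comp_eq_of_sum_fiber_eq q y y' hcb fun c => (c ⬝ᵥ w) ^ 2
  calc ∑ i, L v i * w i
      = ∑ r, q r * ((y' r - y r) ⬝ᵥ w * (y r ⬝ᵥ w)) := by
        simp only [hL]
        exact sum_sum_rankOne_mul_eq_sum_mul_dotProduct q (fun r => y' r - y r) y w
    _ = -(1/2) * ∑ r, q r * ((y' r - y r) ⬝ᵥ w) ^ 2 := by
        simp only [sub_dotProduct]
        exact sum_mul_sub_mul_eq_neg_half_sum_mul_sq q _ _ hquad

/-- The quadratic-form identity for the linearised operator of a complex balanced system. -/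
theorem linearised_operator_identity
    {N R : ℕ} (y y' : Fin R → Fin N → ℝ) (k : Fin R → ℝ)
    (hy : ∀ r i, 0 ≤ y r i) (hy' : ∀ r i, 0 ≤ y' r i) (hk : ∀ r, 0 < k r)
    (u : Fin N → ℝ) (hu : ∀ i, 0 < u i)
    (hcb : ∀ c : Fin N → ℝ,
      ∑ r ∈ Finset.univ.filter (fun r => y r = c), k r * ∏ j, u j ^ y r j
        = ∑ r ∈ Finset.univ.filter (fun r => y' r = c), k r * ∏ j, u j ^ y r j)
    (L : (Fin N → ℝ) → Fin N → ℝ)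
    (hL : ∀ v i, L v i =
      ∑ r, k r * (∏ j, u j ^ y r j) * ∑ j, (y' r i - y r i) * y r j * (v j / u j)) :
    ∀ v : Fin N → ℝ,
      ∑ i, L v i * (v i / u i)
        = -(1/2) * ∑ r, k r * (∏ j, u j ^ y r j)
            * (∑ i, (y' r i - y r i) * (v i / u i)) ^ 2 :=
  linearised_operator_identity_general y y' k u hcb L hL
end

section
/- Let f_i(u) = ∑_{r=1}^R k_r (y_{r,i}' − y_{r,i}) u^{y_r} with stoichiometric coefficients y_{r,j} ∈ {0} ∪ [1,∞), and let u∞ ∈ (0,∞)^N satisfy f_i(u∞) = 0 for all i. Define μ = max over complexes y of ∑_j y_j, and δ = min{2, min{y_{r,j} : y_{r,j} > 1}} − 1 ∈ (0,1]. Then there exists C > 0 such that for all v ∈ ℝ^N with v + u∞ ∈ ℝ_{≥0}^N and all i: |f_i(v + u∞) − ∇f_i(u∞)·v| ≤ C ∑_{j=1}^N (|v_j|^μ + |v_j|^{1+δ}). -/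
/-!
At a point `a` with positive coordinates the monomial `u ↦ ∏ j, u j ^ w j` is smooth, so its
first-order Taylor remainder at `a` is `O(‖v‖²)`, which is at most a multiple of `‖v‖ ^ (1 + δ)`
for small `v` because `δ ≤ 1`. Away from `v = 0` the remainder is at most a multiple of
`‖v‖ ^ (∑ j, w j) + ‖v‖ + 1` with `∑ j, w j ≤ μ`, hence of `‖v‖ ^ μ + ‖v‖ ^ (1 + δ)`. Since
`f i uinf = 0`, the remainder of `f i` is a fixed linear combination of monomial remainders.
-/

open Finset Asymptotics Filter Topology

theorem ContDiffAt.isBigO_sub_sub_fderiv {E F : Type*} [NormedAddCommGroup E] [NormedSpace ℝ E]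
    [NormedAddCommGroup F] [NormedSpace ℝ F] {f : E → F} {a : E} (hf : ContDiffAt ℝ 2 f a) :
    (fun h => f (a + h) - f a - fderiv ℝ f a h) =O[𝓝 0] fun h => ‖h‖ ^ 2 := by
  obtain ⟨L, s, hs, hL⟩ := (hf.fderiv_right (m := 1) le_rfl).exists_lipschitzOnWith
  have hdiff : ∀ᶠ x in 𝓝 a, DifferentiableAt ℝ f x :=
    (hf.eventually (by simp)).mono fun x hx => hx.differentiableAt (by simp)
  obtain ⟨ε, hε, hball⟩ := Metric.mem_nhds_iff.mp (inter_mem hs hdiff)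
  refine .of_bound L (Metric.eventually_nhds_iff_ball.mpr ⟨ε, hε, fun h hh => ?_⟩)
  have hseg : segment ℝ a (a + h) ⊆ Metric.ball a ε :=
    (convex_ball a ε).segment_subset (Metric.mem_ball_self hε) (by simpa using hh)
  -- Mean value inequality for `f - Df(a)` on `[a, a + h]`, where `Df` is `L`-Lipschitz.
  have key := (convex_segment a (a + h)).norm_image_sub_le_of_norm_hasFDerivWithin_le'
    (f' := fderiv ℝ f) (φ := fderiv ℝ f a) (C := L * ‖h‖)
    (fun x hx => ((hball (hseg hx)).2.hasFDerivAt).hasFDerivWithinAt)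
    (fun x hx => by
      have hxa : ‖x - a‖ ≤ ‖h‖ := by
        have := dist_add_dist_of_mem_segment hx
        rw [dist_comm, dist_self_add_right, dist_eq_norm] at this
        linarith [dist_nonneg (x := x) (y := a + h)]
      calc ‖fderiv ℝ f x - fderiv ℝ f a‖
          ≤ L * ‖x - a‖ := hL.norm_sub_le (hball (hseg hx)).1 (hball (Metric.mem_ball_self hε)).1
        _ ≤ L * ‖h‖ := by gcongr)
    (left_mem_segment ℝ _ _) (right_mem_segment ℝ _ _)
  simpa [sq, mul_assoc] using key

theorem rpow_le_mul_rpow_add_rpow {r x s μ p : ℝ} (hr : 0 < r) (hrx : r ≤ x) (hs : 0 ≤ s)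
    (hp : 0 ≤ p) (hsμp : s ≤ μ ∨ s ≤ p) : x ^ s ≤ (1 + (r ^ p)⁻¹) * (x ^ μ + x ^ p) := by
  have hx : 0 < x := hr.trans_le hrx
  have hxμ : 0 ≤ x ^ μ := Real.rpow_nonneg hx.le μ
  have hxp : 0 ≤ x ^ p := Real.rpow_nonneg hx.le p
  have hK : 0 ≤ (r ^ p)⁻¹ := by positivity
  rcases le_or_gt 1 x with h1 | h1
  · have : x ^ s ≤ x ^ μ + x ^ p := by
      rcases hsμp with h | h <;> linarith [Real.rpow_le_rpow_of_exponent_le h1 h]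
    nlinarith
  · have hxs : x ^ s ≤ 1 := Real.rpow_le_one hx.le h1.le hs
    have hrp : 1 ≤ (r ^ p)⁻¹ * x ^ p := by
      rw [inv_mul_eq_div, one_le_div (by positivity)]
      exact Real.rpow_le_rpow hr.le hrx hp
    nlinarith

theorem pi_norm_rpow_le_sum_abs_rpow {ι : Type*} [Fintype ι] {v : ι → ℝ} (hv : v ≠ 0) (p : ℝ) :
    ‖v‖ ^ p ≤ ∑ j, |v j| ^ p := by
  obtain ⟨j, -, hj⟩ := exists_max_image univ (fun j => |v j|)
    (univ_nonempty_iff.mpr (Function.ne_iff.mp hv).nonempty)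
  have hnorm : ‖v‖ = |v j| :=
    le_antisymm ((pi_norm_le_iff_of_nonneg (abs_nonneg _)).mpr fun l => hj l (mem_univ l))
      (norm_le_pi_norm v j)
  rw [hnorm]
  exact single_le_sum (fun l _ => Real.rpow_nonneg (abs_nonneg _) p) (mem_univ j)

noncomputable def rpowMonomial {ι : Type*} [Fintype ι] (w u : ι → ℝ) : ℝ := ∏ j, u j ^ w j

noncomputable def rpowMonomialRemainder {ι : Type*} [Fintype ι] (w a v : ι → ℝ) : ℝ :=
  rpowMonomial w (a + v) - rpowMonomial w a - ∑ j, w j * (rpowMonomial w a / a j) * v j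

section RpowMonomial

variable {ι : Type*} [Fintype ι] {w a : ι → ℝ}

theorem rpowMonomial_nonneg (ha : ∀ j, 0 ≤ a j) : 0 ≤ rpowMonomial w a :=
  prod_nonneg fun j _ => Real.rpow_nonneg (ha j) _

theorem abs_rpowMonomial_le (hw : ∀ j, 0 ≤ w j) (u : ι → ℝ) :
    |rpowMonomial w u| ≤ ‖u‖ ^ ∑ j, w j := by
  rw [rpowMonomial, abs_prod, Real.rpow_sum_of_nonneg (norm_nonneg u) fun j _ => hw j]
  gcongr with j
  exact (Real.abs_rpow_le_abs_rpow _ _).trans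
    (Real.rpow_le_rpow (abs_nonneg _) (norm_le_pi_norm u j) (hw j))

theorem contDiffAt_rpowMonomial (ha : ∀ j, 0 < a j) {n : WithTop ℕ∞} :
    ContDiffAt ℝ n (rpowMonomial w) a :=
  contDiffAt_prod fun j _ => (contDiffAt_apply ℝ ℝ j a).rpow_const_of_ne (ha j).ne'

theorem hasFDerivAt_rpowMonomial (ha : ∀ j, 0 < a j) :
    HasFDerivAt (rpowMonomial w)
      (∑ j, (w j * (rpowMonomial w a / a j)) •
        ContinuousLinearMap.proj (R := ℝ) (φ := fun _ : ι => ℝ) j) a := by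
  classical
  have h : HasFDerivAt (rpowMonomial w) _ a :=
    HasFDerivAt.finsetProd (u := univ) (g := fun j (u : ι → ℝ) => u j ^ w j) fun j _ =>
      (hasFDerivAt_apply j a).rpow_const (Or.inl (ha j).ne')
  refine h.congr_fderiv (sum_congr rfl fun j _ => ?_)
  ext v
  simp only [smul_apply, ContinuousLinearMap.proj_apply, smul_eq_mul, rpowMonomial,
    ← mul_prod_erase univ (fun l => a l ^ w l) (mem_univ j), Real.rpow_sub_one (ha j).ne']
  ring

theorem isBigO_rpowMonomialRemainder (ha : ∀ j, 0 < a j) :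
    rpowMonomialRemainder w a =O[𝓝 0] fun v => ‖v‖ ^ 2 := by
  refine ((contDiffAt_rpowMonomial (w := w) ha).isBigO_sub_sub_fderiv).congr_left fun v => ?_
  simp [rpowMonomialRemainder, (hasFDerivAt_rpowMonomial ha).fderiv]

theorem abs_rpowMonomialRemainder_le (hw : ∀ j, 0 ≤ w j) (ha : ∀ j, 0 < a j) (v : ι → ℝ) :
    |rpowMonomialRemainder w a v| ≤ (‖a‖ + ‖v‖) ^ (∑ j, w j) + rpowMonomial w a
      + (∑ j, w j * (rpowMonomial w a / a j)) * ‖v‖ := by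
  have hm : 0 ≤ rpowMonomial w a := rpowMonomial_nonneg fun j => (ha j).le
  have hpow : |rpowMonomial w (a + v)| ≤ (‖a‖ + ‖v‖) ^ (∑ j, w j) :=
    (abs_rpowMonomial_le hw _).trans
      (Real.rpow_le_rpow (norm_nonneg _) (norm_add_le a v) (sum_nonneg fun j _ => hw j))
  have hlin : |∑ j, w j * (rpowMonomial w a / a j) * v j|
      ≤ (∑ j, w j * (rpowMonomial w a / a j)) * ‖v‖ := by
    rw [sum_mul]
    refine (abs_sum_le_sum_abs _ _).trans (sum_le_sum fun j _ => ?_)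
    have hc : 0 ≤ w j * (rpowMonomial w a / a j) := mul_nonneg (hw j) (div_nonneg hm (ha j).le)
    rw [abs_mul, abs_of_nonneg hc]
    exact mul_le_mul_of_nonneg_left (norm_le_pi_norm v j) hc
  have h₁ := abs_sub (rpowMonomial w (a + v) - rpowMonomial w a)
    (∑ j, w j * (rpowMonomial w a / a j) * v j)
  have h₂ := abs_sub (rpowMonomial w (a + v)) (rpowMonomial w a)
  rw [abs_of_nonneg hm] at h₂
  rw [rpowMonomialRemainder]
  linarith

theorem exists_abs_rpowMonomialRemainder_le_of_norm_lt {p : ℝ} (ha : ∀ j, 0 < a j)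
    (hp : p ≤ 2) : ∃ c ≥ 0, ∃ ε > 0, ∀ v : ι → ℝ, ‖v‖ < ε →
      |rpowMonomialRemainder w a v| ≤ c * ‖v‖ ^ p := by
  obtain ⟨c, hc, hcbound⟩ := (isBigO_rpowMonomialRemainder (w := w) ha).exists_pos
  obtain ⟨ε, hε, hnear⟩ := Metric.eventually_nhds_iff_ball.mp hcbound.bound
  refine ⟨c, hc.le, min ε 1, by positivity, fun v hv => ?_⟩
  have hvε : v ∈ Metric.ball 0 ε := mem_ball_zero_iff.mpr (hv.trans_le (min_le_left ε 1))
  calc |rpowMonomialRemainder w a v| ≤ c * ‖v‖ ^ (2 : ℝ) := by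
        simpa [Real.rpow_two] using hnear v hvε
    _ ≤ c * ‖v‖ ^ p := by
        refine mul_le_mul_of_nonneg_left ?_ hc.le
        exact Real.rpow_le_rpow_of_exponent_ge_of_imp (norm_nonneg v)
          (hv.le.trans (min_le_right ε 1)) hp fun _ h => absurd h two_ne_zero

theorem exists_abs_rpowMonomialRemainder_le_of_le_norm {μ p r : ℝ} (hw : ∀ j, 0 ≤ w j)
    (ha : ∀ j, 0 < a j) (hwμ : ∑ j, w j ≤ μ) (hp : 1 ≤ p) (hr : 0 < r) :
    ∃ D ≥ 0, ∀ v : ι → ℝ, r ≤ ‖v‖ →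
      |rpowMonomialRemainder w a v| ≤ D * (‖v‖ ^ μ + ‖v‖ ^ p) := by
  set s := ∑ j, w j
  set m := rpowMonomial w a
  set B := ∑ j, w j * (m / a j)
  set K := 1 + (r ^ p)⁻¹
  have hs : 0 ≤ s := sum_nonneg fun j _ => hw j
  have hm : 0 ≤ m := rpowMonomial_nonneg fun j => (ha j).le
  have hB : 0 ≤ B := sum_nonneg fun j _ => mul_nonneg (hw j) (div_nonneg hm (ha j).le)
  refine ⟨((‖a‖ / r + 1) ^ s + m + B) * K, by positivity, fun v hvr => ?_⟩
  have hx : 0 < ‖v‖ := hr.trans_le hvr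
  set G := ‖v‖ ^ μ + ‖v‖ ^ p
  have hGs : ‖v‖ ^ s ≤ K * G :=
    rpow_le_mul_rpow_add_rpow hr hvr hs (by linarith) (Or.inl hwμ)
  have hG0 : 1 ≤ K * G := by
    simpa using rpow_le_mul_rpow_add_rpow hr hvr le_rfl (by linarith) (Or.inl (hs.trans hwμ))
  have hG1 : ‖v‖ ≤ K * G := by
    simpa using rpow_le_mul_rpow_add_rpow hr hvr zero_le_one (by linarith) (Or.inr hp)
  have hnorm : ‖a‖ + ‖v‖ ≤ (‖a‖ / r + 1) * ‖v‖ := by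
    rw [add_mul, div_mul_eq_mul_div, one_mul]
    gcongr
    rw [le_div_iff₀ hr]
    exact mul_le_mul_of_nonneg_left hvr (norm_nonneg a)
  calc |rpowMonomialRemainder w a v| ≤ (‖a‖ + ‖v‖) ^ s + m + B * ‖v‖ :=
        abs_rpowMonomialRemainder_le hw ha v
    _ ≤ (‖a‖ / r + 1) ^ s * ‖v‖ ^ s + m * 1 + B * ‖v‖ := by
        rw [mul_one, ← Real.mul_rpow (by positivity) hx.le]
        gcongr
    _ ≤ (‖a‖ / r + 1) ^ s * (K * G) + m * (K * G) + B * (K * G) := by gcongr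
    _ = ((‖a‖ / r + 1) ^ s + m + B) * K * G := by ring

theorem exists_abs_rpowMonomialRemainder_le {μ p : ℝ} (hw : ∀ j, 0 ≤ w j) (ha : ∀ j, 0 < a j)
    (hwμ : ∑ j, w j ≤ μ) (hp1 : 1 ≤ p) (hp2 : p ≤ 2) :
    ∃ C ≥ 0, ∀ v : ι → ℝ, |rpowMonomialRemainder w a v| ≤ C * ∑ j, (|v j| ^ μ + |v j| ^ p) := by
  obtain ⟨c, hc, ε, hε, hnear⟩ := exists_abs_rpowMonomialRemainder_le_of_norm_lt (w := w) ha hp2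
  obtain ⟨D, hD, hfar⟩ := exists_abs_rpowMonomialRemainder_le_of_le_norm hw ha hwμ hp1 hε
  refine ⟨c + D, by positivity, fun v => ?_⟩
  rcases eq_or_ne v 0 with rfl | hv
  · simp only [rpowMonomialRemainder, add_zero, Pi.zero_apply, mul_zero, sum_const_zero,
      sub_self, abs_zero]
    positivity
  have hsum : ‖v‖ ^ μ + ‖v‖ ^ p ≤ ∑ j, (|v j| ^ μ + |v j| ^ p) := by
    rw [sum_add_distrib]
    exact add_le_add (pi_norm_rpow_le_sum_abs_rpow hv μ) (pi_norm_rpow_le_sum_abs_rpow hv p)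
  have hG : 0 ≤ ‖v‖ ^ μ := by positivity
  calc |rpowMonomialRemainder w a v| ≤ (c + D) * (‖v‖ ^ μ + ‖v‖ ^ p) := by
        rcases lt_or_ge ‖v‖ ε with hvε | hvε
        · nlinarith [hnear v hvε, Real.rpow_nonneg (norm_nonneg v) p]
        · nlinarith [hfar v hvε, Real.rpow_nonneg (norm_nonneg v) p]
    _ ≤ (c + D) * ∑ j, (|v j| ^ μ + |v j| ^ p) := by gcongr

end RpowMonomial

theorem sum_mul_rpowMonomialRemainder_eq {ι κ : Type*} [Fintype ι] [Fintype κ] (c : κ → ℝ)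
    (w : κ → ι → ℝ) (a v : ι → ℝ) (h0 : ∑ r, c r * rpowMonomial (w r) a = 0) :
    ∑ r, c r * rpowMonomialRemainder (w r) a v = ∑ r, c r * rpowMonomial (w r) (a + v)
      - ∑ r, c r * ∑ j, w r j * (rpowMonomial (w r) a / a j) * v j := by
  simp only [rpowMonomialRemainder, mul_sub, sum_sub_distrib, h0, sub_zero]

theorem mass_action_remainder_bound_general
    {N R : ℕ} (k : Fin R → ℝ)
    (y y' : Fin R → Fin N → ℝ)
    (hy : ∀ r j, y r j = 0 ∨ 1 ≤ y r j)
    (uinf : Fin N → ℝ) (hu : ∀ i, 0 < uinf i)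
    (f : Fin N → (Fin N → ℝ) → ℝ)
    (hf : ∀ i u, f i u = ∑ r, k r * (y' r i - y r i) * ∏ j, u j ^ y r j)
    (heq : ∀ i, f i uinf = 0)
    (μ : ℝ)
    (hμ : IsGreatest ((Set.range fun r => ∑ j, y r j) ∪ (Set.range fun r => ∑ j, y' r j)) μ)
    (δ : ℝ) (hδ0 : 0 < δ) (hδ1 : δ ≤ 1) :
    ∃ C > 0, ∀ v : Fin N → ℝ, (∀ j, 0 ≤ v j + uinf j) → ∀ i,
      |f i (fun j => v j + uinf j)
          - ∑ r, k r * (y' r i - y r i)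
              * ∑ j, y r j * ((∏ l, uinf l ^ y r l) / uinf j) * v j|
        ≤ C * ∑ j, (|v j| ^ μ + |v j| ^ (1 + δ)) := by
  have hy0 : ∀ r j, 0 ≤ y r j := fun r j => (hy r j).elim (fun h => h.ge) zero_le_one.trans
  choose C hC0 hC using fun r => exists_abs_rpowMonomialRemainder_le (p := 1 + δ) (hy0 r) hu
    (hμ.2 (Or.inl ⟨r, rfl⟩)) (by linarith) (by linarith)
  set c : Fin N → Fin R → ℝ := fun i r => k r * (y' r i - y r i)
  have hc : ∀ i, 0 ≤ ∑ r, |c i r| * C r := fun i =>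
    sum_nonneg fun r _ => mul_nonneg (abs_nonneg _) (hC0 r)
  refine ⟨1 + ∑ i, ∑ r, |c i r| * C r,
    add_pos_of_pos_of_nonneg one_pos (sum_nonneg fun i _ => hc i), fun v _ i => ?_⟩
  have hrem := sum_mul_rpowMonomialRemainder_eq (c i) y uinf v (by rw [← heq i, hf]; rfl)
  calc _ = |∑ r, c i r * rpowMonomialRemainder (y r) uinf v| := by
        rw [hrem, hf]; simp only [c, rpowMonomial, Pi.add_apply, add_comm (uinf _)]
    _ ≤ ∑ r, |c i r| * C r * ∑ j, (|v j| ^ μ + |v j| ^ (1 + δ)) := by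
        refine (abs_sum_le_sum_abs _ _).trans (sum_le_sum fun r _ => ?_)
        rw [abs_mul, mul_assoc]
        exact mul_le_mul_of_nonneg_left (hC r v) (abs_nonneg _)
    _ ≤ _ := by
        rw [← sum_mul]
        gcongr
        exact (single_le_sum (fun i _ => hc i) (mem_univ i)).trans
          (le_add_of_nonneg_left zero_le_one)

/-- Superlinear bound on the Taylor remainder of the mass-action nonlinearity at a
positive equilibrium `uinf`:
`|f_i(v+uinf) − ∇f_i(uinf)·v| ≤ C ∑_j (|v_j|^μ + |v_j|^{1+δ})`. -/
theorem mass_action_remainder_bound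
    {N R : ℕ} (k : Fin R → ℝ) (hk : ∀ r, 0 < k r)
    (y y' : Fin R → Fin N → ℝ)
    (hy : ∀ r j, y r j = 0 ∨ 1 ≤ y r j) (hy' : ∀ r j, y' r j = 0 ∨ 1 ≤ y' r j)
    (uinf : Fin N → ℝ) (hu : ∀ i, 0 < uinf i)
    (f : Fin N → (Fin N → ℝ) → ℝ)
    (hf : ∀ i u, f i u = ∑ r, k r * (y' r i - y r i) * ∏ j, u j ^ y r j)
    (heq : ∀ i, f i uinf = 0)
    (μ : ℝ)
    (hμ : IsGreatest ((Set.range fun r => ∑ j, y r j) ∪ (Set.range fun r => ∑ j, y' r j)) μ)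
    (δ : ℝ) (hδ0 : 0 < δ) (hδ1 : δ ≤ 1)
    (hδy : ∀ r j, 1 < y r j → 1 + δ ≤ y r j) :
    ∃ C > 0, ∀ v : Fin N → ℝ, (∀ j, 0 ≤ v j + uinf j) → ∀ i,
      |f i (fun j => v j + uinf j)
          - ∑ r, k r * (y' r i - y r i)
              * ∑ j, y r j * ((∏ l, uinf l ^ y r l) / uinf j) * v j|
        ≤ C * ∑ j, (|v j| ^ μ + |v j| ^ (1 + δ)) :=
  mass_action_remainder_bound_general k y y' hy uinf hu f hf heq μ hμ δ hδ0 hδ1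
end

section
/- Let d ≥ 3, μ > 1, p₀ = d(μ−1)/2, δ > 0, and p ≥ p₀ + δ with p > 2. Set q = dp/(d−2) and define θ by 1/(μ+p−1) = θ/q + (1−θ)/(p₀+δ), i.e., θ = q[(μ+p−1) − p₀ − δ]/((q − p₀ − δ)(μ+p−1)). Then θ(μ+p−1) < p strictly (assuming q > p₀ + δ and p₀ + δ ≤ μ+p−1 ≤ q). -/
/-! The Sobolev exponent and the critical exponent are linked by `q(μ-1) = (q-p)p₀`, which turns
`q((μ+p-1) - p₀ - δ)` into `p(q - p₀ - δ) - (q-p)δ`. Hence `θ(μ+p-1) = p - (q-p)δ/(q-p₀-δ)`,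
and the defect `(q-p)δ/(q-p₀-δ)` is positive since `q > p` and `δ > 0`. -/

lemma sobolev_conjugate_sub_self {d p q : ℝ} (hd : d ≠ 2) (hq : q = d * p / (d - 2)) :
    q - p = 2 * p / (d - 2) := by
  have : d - 2 ≠ 0 := sub_ne_zero.mpr hd
  rw [hq]; field_simp; ring

lemma sobolev_conjugate_mul_sub_one {d μ p p₀ q : ℝ} (hd : d ≠ 2) (hq : q = d * p / (d - 2))
    (hp₀ : p₀ = d * (μ - 1) / 2) : q * (μ - 1) = (q - p) * p₀ := by
  have : d - 2 ≠ 0 := sub_ne_zero.mpr hd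
  rw [sobolev_conjugate_sub_self hd hq, hq, hp₀]; field_simp

theorem interpolation_exponent_strict_general
    (d : ℕ) (hd : 3 ≤ d) (μ p p₀ δ q θ : ℝ)
    (hμ : 1 < μ) (hδ : 0 < δ)
    (hp₀ : p₀ = (d : ℝ) * (μ - 1) / 2)
    (hp2 : 2 < p)
    (hq : q = (d : ℝ) * p / ((d : ℝ) - 2))
    (hqp₀ : p₀ + δ < q)
    (hθ : θ = q * ((μ + p - 1) - p₀ - δ) / ((q - p₀ - δ) * (μ + p - 1))) :
    θ * (μ + p - 1) < p := by
  have hd2 : (2 : ℝ) < d := by exact_mod_cast hd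
  have hqp : 0 < q - p := by
    rw [sobolev_conjugate_sub_self hd2.ne' hq]; exact div_pos (by linarith) (by linarith)
  have hden : 0 < q - p₀ - δ := by linarith
  have key : q * ((μ + p - 1) - p₀ - δ) = p * (q - p₀ - δ) - (q - p) * δ := by
    linear_combination sobolev_conjugate_mul_sub_one hd2.ne' hq hp₀
  calc θ * (μ + p - 1) = p - (q - p) * δ / (q - p₀ - δ) := by
        have hs : μ + p - 1 ≠ 0 := (by linarith : 0 < μ + p - 1).ne'
        rw [hθ, key]; field_simp
    _ < p := sub_lt_self p (div_pos (mul_pos hqp hδ) hden)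

/-- Strict interpolation exponent inequality permitting Young absorption:
with `p₀ = d(μ−1)/2`, `q = dp/(d−2)` and
`θ = q[(μ+p−1) − p₀ − δ]/((q − p₀ − δ)(μ+p−1))`, one has `θ(μ+p−1) < p`. -/
theorem interpolation_exponent_strict
    (d : ℕ) (hd : 3 ≤ d) (μ p p₀ δ q θ : ℝ)
    (hμ : 1 < μ) (hδ : 0 < δ)
    (hp₀ : p₀ = (d : ℝ) * (μ - 1) / 2)
    (hp : p₀ + δ ≤ p) (hp2 : 2 < p)
    (hq : q = (d : ℝ) * p / ((d : ℝ) - 2))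
    (hqp₀ : p₀ + δ < q) (hlow : p₀ + δ ≤ μ + p - 1) (hhigh : μ + p - 1 ≤ q)
    (hθ : θ = q * ((μ + p - 1) - p₀ - δ) / ((q - p₀ - δ) * (μ + p - 1))) :
    θ * (μ + p - 1) < p :=
  interpolation_exponent_strict_general d hd μ p p₀ δ q θ hμ hδ hp₀ hp2 hq hqp₀ hθ
end
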